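/- arXiv:1407.5613 — 8 statements merged into one kernel-verified Lean document; each statement's English description precedes it below -/
import Mathlib

section
/- Let F be a finite field with q elements, n ≥ 2, and let U ⊆ F^n. If for some k with 0 ≤ k ≤ n−2 there exists a (k+1)-dimensional F-linear subspace S of F^n whose corresponding k-subspace at infinity is not determined by U, then |U| ≤ q^(n−1). -/
open Pointwise

/-- The subspace at infinity corresponding to the linear subspace `S ≤ V` is *determined*
by the affine point set `U ⊆ V` if for some `x` the coset `x + S` is affinely spanned by
`U ∩ (x + S)`, i.e. the coset is contained in the affine span of `U ∩ (x + S)`. -/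
def IsDeterminedBy {F V : Type*} [Field F] [AddCommGroup V] [Module F V]
    (U : Set V) (S : Submodule F V) : Prop :=
  ∃ x : V, x +ᵥ (S : Set V) ⊆ (affineSpan F (U ∩ (x +ᵥ (S : Set V))) : Set V)


/-!
If the coset `x + S` is not affinely spanned by `U ∩ (x + S)`, that span is a proper affine
subspace of `x + S`, so it has dimension at most `k` and at most `q ^ k` points. Summing over the
`q ^ (n - k - 1)` cosets of `S` gives `|U| ≤ q ^ (n - 1)`.
-/

open Module

theorem AddSubgroup.ncard_le_mul_natCard_quotient {G : Type*} [AddGroup G] [Finite G]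
    {U : Set G} (H : AddSubgroup G) {m : ℕ} (h : ∀ x : G, (U ∩ (x +ᵥ (H : Set G))).ncard ≤ m) :
    U.ncard ≤ m * Nat.card (G ⧸ H) := by
  classical
  have := Fintype.ofFinite G
  have := Fintype.ofFinite (G ⧸ H)
  rw [Set.ncard_eq_toFinset_card', Nat.card_eq_fintype_card]
  refine Finset.card_le_mul_card_image_of_maps_to (f := ((↑) : G → G ⧸ H))
    (fun _ _ ↦ Finset.mem_univ _) m ?_
  rintro y -
  obtain ⟨x, rfl⟩ := QuotientAddGroup.mk_surjective y
  have hfiber : (({z ∈ U.toFinset | (z : G ⧸ H) = x} : Finset G) : Set G) =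
      U ∩ (x +ᵥ (H : Set G)) := by
    ext z
    simp [Set.mem_vadd_set_iff_neg_vadd_mem, QuotientAddGroup.eq, eq_comm]
  rw [← Set.ncard_coe_finset, hfiber]
  exact h x

namespace AffineSubspace

theorem natCard_eq_natCard_direction {k V P : Type*} [Ring k] [AddCommGroup V] [Module k V]
    [AddTorsor V P] (s : AffineSubspace k P) [Nonempty s] :
    Nat.card s = Nat.card s.direction :=
  Nat.card_congr (Equiv.vaddConst (Classical.arbitrary s)).symm

theorem coe_mk'_eq_vadd_coe {R V : Type*} [Ring R] [AddCommGroup V] [Module R V] (x : V)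
    (S : Submodule R V) : (mk' x S : Set V) = x +ᵥ (S : Set V) := by
  ext z
  simp [mem_mk', Set.mem_vadd_set_iff_neg_vadd_mem, neg_add_eq_sub]

end AffineSubspace

section Field

variable {F V : Type*} [Field F] [AddCommGroup V] [Module F V]

theorem affineSpan_inter_vadd_lt_mk'_of_not_isDeterminedBy {U : Set V} {S : Submodule F V}
    (hU : ¬ IsDeterminedBy U S) (x : V) :
    affineSpan F (U ∩ (x +ᵥ (S : Set V))) < AffineSubspace.mk' x S := by
  rw [← AffineSubspace.coe_mk'_eq_vadd_coe]
  refine lt_of_le_of_ne (affineSpan_le.2 Set.inter_subset_right) fun heq ↦ hU ⟨x, ?_⟩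
  rw [← AffineSubspace.coe_mk'_eq_vadd_coe]
  exact heq.symm.le

theorem Submodule.natCard_quotient [Module.Finite F V] (S : Submodule F V) :
    Nat.card (V ⧸ S) = Nat.card F ^ (finrank F V - finrank F S) := by
  rw [Module.natCard_eq_pow_finrank (K := F), Submodule.finrank_quotient]

theorem ncard_le_of_affineSpan_lt [Finite F] [Finite V] {T : Set V} {A : AffineSubspace F V}
    (hT : affineSpan F T < A) : T.ncard ≤ Nat.card F ^ (finrank F A.direction - 1) := by
  rcases T.eq_empty_or_nonempty with rfl | hne
  · simp
  have hspan : (affineSpan F T : Set V).Nonempty := hne.mono (subset_affineSpan F T)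
  have : Nonempty (affineSpan F T) := hspan.to_subtype
  have hrank : finrank F (affineSpan F T).direction < finrank F A.direction :=
    Submodule.finrank_lt_finrank_of_lt (AffineSubspace.direction_lt_of_nonempty hT hspan)
  calc T.ncard ≤ (affineSpan F T : Set V).ncard :=
        Set.ncard_le_ncard (subset_affineSpan F T) (Set.toFinite _)
    _ = Nat.card F ^ finrank F (affineSpan F T).direction := by
        rw [← Nat.card_coe_set_eq, SetLike.coe_sort_coe,
          AffineSubspace.natCard_eq_natCard_direction, Module.natCard_eq_pow_finrank (K := F)]
    _ ≤ Nat.card F ^ (finrank F A.direction - 1) :=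
        Nat.pow_le_pow_right Nat.card_pos (by omega)

end Field

theorem stmt_0_general {F : Type*} [Field F] [Fintype F] {q n k : ℕ}
    (hq : Fintype.card F = q)
    (U : Set (Fin n → F)) (S : Submodule F (Fin n → F))
    (hS : Module.finrank F S = k + 1)
    (hnd : ¬ IsDeterminedBy U S) :
    U.ncard ≤ q ^ (n - 1) := by
  rw [← Nat.card_eq_fintype_card] at hq
  subst hq
  have hcoset (x : Fin n → F) : (U ∩ (x +ᵥ (S : Set (Fin n → F)))).ncard ≤ Nat.card F ^ k := by
    have := ncard_le_of_affineSpan_lt (affineSpan_inter_vadd_lt_mk'_of_not_isDeterminedBy hnd x)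
    rwa [AffineSubspace.direction_mk', hS, Nat.add_sub_cancel] at this
  have hSle : k + 1 ≤ n := by simpa [hS] using S.finrank_le
  calc U.ncard ≤ Nat.card F ^ k * Nat.card ((Fin n → F) ⧸ S) :=
        S.toAddSubgroup.ncard_le_mul_natCard_quotient hcoset
    _ = Nat.card F ^ (n - 1) := by
        rw [Submodule.natCard_quotient, finrank_fin_fun, hS, ← pow_add]
        congr 1
        omega

/-- If `U ⊆ F^n` leaves some `k`-subspace at infinity undetermined
(`0 ≤ k ≤ n-2`), then `|U| ≤ q^(n-1)`. -/
theorem stmt_0 {F : Type*} [Field F] [Fintype F] {q n k : ℕ}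
    (hq : Fintype.card F = q) (hn : 2 ≤ n) (hk : k ≤ n - 2)
    (U : Set (Fin n → F)) (S : Submodule F (Fin n → F))
    (hS : Module.finrank F S = k + 1)
    (hnd : ¬ IsDeterminedBy U S) :
    U.ncard ≤ q ^ (n - 1) :=
  stmt_0_general hq U S hS hnd
end

section
/- Let F be a finite field with q elements, m ≥ 2, d ≥ 1, n = m + d, and let U₀ ⊆ F^m with |U₀| = q^(m−1). Let U = U₀ × F^d ⊆ F^m × F^d = F^n be the cylinder (cone) over U₀ with vertex the subspace at infinity corresponding to {0} × F^d. Let π : F^m × F^d → F^m be the projection onto the first factor. Let S ⊆ F^n be an F-linear subspace of dimension r+1 (0 ≤ r ≤ n−2) such that S is not contained in {0} × F^d and such that the projected subspace S₀ = π(S) ⊆ F^m has dimension at most m−1. Then the subspace at infinity corresponding to S is not determined by U if and only if the subspace at infinity corresponding to S₀ is not determined by U₀. -/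
open Pointwise

section Submodule

variable {R M N : Type*} [Ring R] [AddCommGroup M] [Module R M] [AddCommGroup N] [Module R N]

theorem Submodule.map_map_sup_inf_ker_eq {S : Submodule R M} {p : M →ₗ[R] N} {g : N →ₗ[R] M}
    (hpg : p ∘ₗ g = LinearMap.id) (hg : (S.map p).map g ≤ S) :
    (S.map p).map g ⊔ (S ⊓ LinearMap.ker p) = S := by
  refine le_antisymm (sup_le hg inf_le_left) fun s hs => ?_
  have hgs : g (p s) ∈ S := hg ⟨p s, ⟨s, hs, rfl⟩, rfl⟩
  have hker : p (s - g (p s)) = 0 := by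
    rw [map_sub, ← LinearMap.comp_apply p g, hpg, LinearMap.id_apply, sub_self]
  rw [← add_sub_cancel (g (p s)) s]
  exact Submodule.add_mem_sup ⟨p s, ⟨s, hs, rfl⟩, rfl⟩ ⟨S.sub_mem hs hgs, hker⟩

end Submodule

section IsDeterminedBy

variable {F V W : Type*} [Field F] [AddCommGroup V] [Module F V] [AddCommGroup W] [Module F W]

theorem Submodule.mem_vadd_coe_iff {S : Submodule F V} {x z : V} :
    z ∈ x +ᵥ (S : Set V) ↔ z - x ∈ S := by
  rw [Set.mem_vadd_set_iff_neg_vadd_mem, vadd_eq_add, neg_add_eq_sub]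
  rfl

theorem exists_linearMap_prodMk_mem (S : Submodule F (V × W)) :
    ∃ L : V →ₗ[F] W, ∀ v ∈ S.map (LinearMap.fst F V W), (v, L v) ∈ S := by
  obtain ⟨σ, hσ⟩ := ((LinearMap.fst F V W).submoduleMap S).exists_rightInverse_of_surjective
    (LinearMap.range_eq_top.2 (LinearMap.submoduleMap_surjective _ _))
  obtain ⟨L, hL⟩ := LinearMap.exists_extend ((LinearMap.snd F V W) ∘ₗ S.subtype ∘ₗ σ)
  refine ⟨L, fun v hv => ?_⟩
  have hfst : ((σ ⟨v, hv⟩ : S) : V × W).1 = v :=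
    congr_arg Subtype.val (LinearMap.congr_fun hσ ⟨v, hv⟩)
  have hsnd : L v = ((σ ⟨v, hv⟩ : S) : V × W).2 := LinearMap.congr_fun hL ⟨v, hv⟩
  rw [show ((v, L v) : V × W) = σ ⟨v, hv⟩ from Prod.ext hfst.symm hsnd]
  exact (σ ⟨v, hv⟩).2

theorem IsDeterminedBy.map {U : Set V} {U' : Set W} {S : Submodule F V}
    (h : IsDeterminedBy U S) (f : V →ₗ[F] W) (hf : Set.MapsTo f U U') :
    IsDeterminedBy U' (S.map f) := by
  obtain ⟨x, hx⟩ := h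
  refine ⟨f x, ?_⟩
  rw [Submodule.map_coe, ← Set.image_vadd_distrib]
  calc f '' (x +ᵥ (S : Set V))
      ⊆ f.toAffineMap '' (affineSpan F (U ∩ (x +ᵥ (S : Set V))) : Set V) := Set.image_mono hx
    _ = affineSpan F (f '' (U ∩ (x +ᵥ (S : Set V)))) := by
      rw [← AffineSubspace.coe_map, AffineSubspace.map_span, LinearMap.coe_toAffineMap]
    _ ⊆ affineSpan F (U' ∩ f '' (x +ᵥ (S : Set V))) :=
      affineSpan_mono F fun _ ⟨u, hu, hfu⟩ => hfu ▸ ⟨hf hu.1, u, hu.2, rfl⟩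

theorem IsDeterminedBy.sup {U : Set V} {S K : Submodule F V} (h : IsDeterminedBy U S)
    (hU : ∀ u ∈ U, ∀ k ∈ K, u + k ∈ U) : IsDeterminedBy U (S ⊔ K) := by
  obtain ⟨x, hx⟩ := h
  set E := affineSpan F (U ∩ (x +ᵥ ((S ⊔ K : Submodule F V) : Set V)))
  have hxS : x +ᵥ (S : Set V) ⊆ E := fun z hz =>
    affineSpan_mono F (Set.inter_subset_inter_right U
      (Set.vadd_set_mono (SetLike.coe_mono le_sup_left))) (hx hz)
  -- any point of `U` in the coset shows that `K` lies in the direction of `E`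
  obtain ⟨a, haU, haS⟩ : (U ∩ (x +ᵥ (S : Set V))).Nonempty := by
    rw [← affineSpan_nonempty (k := F)]
    exact ⟨x, hx (Submodule.mem_vadd_coe_iff.2 (by simp))⟩
  rw [Submodule.mem_vadd_coe_iff] at haS
  have hK : ∀ k ∈ K, k ∈ E.direction := fun k hk => by
    have hmem : ∀ c ∈ K, a + c ∈ E := fun c hc =>
      subset_affineSpan F _ ⟨hU a haU c hc, Submodule.mem_vadd_coe_iff.2 <| by
        rw [add_sub_right_comm]
        exact Submodule.add_mem_sup haS hc⟩
    simpa using AffineSubspace.vsub_mem_direction (hmem k hk) (hmem 0 K.zero_mem)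
  refine ⟨x, fun z hz => ?_⟩
  obtain ⟨s, hs, k, hk, hsk⟩ := Submodule.mem_sup.1 (Submodule.mem_vadd_coe_iff.1 hz)
  have hxs : x + s ∈ E := hxS (Submodule.mem_vadd_coe_iff.2 (by simpa using hs))
  have hz' : z = k +ᵥ (x + s) := by
    rw [vadd_eq_add, ← eq_sub_iff_add_eq.1 hsk]
    abel
  rw [hz']
  exact AffineSubspace.vadd_mem_of_mem_direction (hK k hk) hxs

theorem isDeterminedBy_prod_univ_iff (U₀ : Set V) (S : Submodule F (V × W)) :
    IsDeterminedBy (U₀ ×ˢ Set.univ) S ↔ IsDeterminedBy U₀ (S.map (LinearMap.fst F V W)) := by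
  refine ⟨fun h => h.map _ fun u hu => hu.1, fun h => ?_⟩
  obtain ⟨L, hL⟩ := exists_linearMap_prodMk_mem S
  have hgraph := (h.map (U' := U₀ ×ˢ Set.univ) (LinearMap.id.prod L)
    fun u hu => ⟨hu, trivial⟩).sup (K := S ⊓ LinearMap.ker (LinearMap.fst F V W))
    fun u hu k hk => ⟨by simpa [show k.1 = 0 from hk.2] using hu.1, trivial⟩
  rwa [Submodule.map_map_sup_inf_ker_eq (LinearMap.fst_prod _ _)
    (by rintro _ ⟨v, hv, rfl⟩; exact hL v hv)] at hgraph

end IsDeterminedBy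

theorem stmt_3_general {F : Type*} [Field F] {m d : ℕ}
    (U₀ : Set (Fin m → F))
    (U : Set ((Fin m → F) × (Fin d → F)))
    (hU : U = U₀ ×ˢ (Set.univ : Set (Fin d → F)))
    (S : Submodule F ((Fin m → F) × (Fin d → F)))
    (S₀ : Submodule F (Fin m → F))
    (hS₀ : S₀ = S.map (LinearMap.fst F (Fin m → F) (Fin d → F))) :
    (¬ IsDeterminedBy U S ↔ ¬ IsDeterminedBy U₀ S₀) := by
  subst hU hS₀
  exact not_congr (isDeterminedBy_prod_univ_iff U₀ S)

/-- For the cylinder (cone) `U = U₀ × F^d` over `U₀ ⊆ F^m` with vertex the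
subspace at infinity corresponding to `{0} × F^d`, an `r`-subspace at infinity
(corresponding to `S`, not contained in the vertex, projecting to a proper subspace `S₀`
of `F^m`) is undetermined by `U` iff its projection is undetermined by `U₀`. -/
theorem stmt_3 {F : Type*} [Field F] [Fintype F] {q m d r : ℕ}
    (hq : Fintype.card F = q) (hm : 2 ≤ m) (hd : 1 ≤ d)
    (U₀ : Set (Fin m → F)) (hU₀ : U₀.ncard = q ^ (m - 1))
    (U : Set ((Fin m → F) × (Fin d → F)))
    (hU : U = U₀ ×ˢ (Set.univ : Set (Fin d → F)))
    (S : Submodule F ((Fin m → F) × (Fin d → F)))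
    (hr : r ≤ m + d - 2) (hS : Module.finrank F S = r + 1)
    (hSv : ¬ S ≤ Submodule.prod (⊥ : Submodule F (Fin m → F)) (⊤ : Submodule F (Fin d → F)))
    (S₀ : Submodule F (Fin m → F))
    (hS₀ : S₀ = S.map (LinearMap.fst F (Fin m → F) (Fin d → F)))
    (hdim : Module.finrank F S₀ ≤ m - 1) :
    (¬ IsDeterminedBy U S ↔ ¬ IsDeterminedBy U₀ S₀) :=
  stmt_3_general U₀ U hU S S₀ hS₀
end

section
/- Let F be a finite field with q elements, n ≥ 3, and let U ⊆ F^n with |U| = q^(n−1). Let k be an integer with 0 ≤ k ≤ n−3. If S is a (k+1)-dimensional F-linear subspace of F^n whose corresponding k-subspace at infinity is determined by U, then there exists a (k+2)-dimensional F-linear subspace S' with S ⊆ S' whose corresponding (k+1)-subspace at infinity is also determined by U. -/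
/-!
A coset `x + S` has `q ^ (k + 1) < q ^ (n - 1) = |U|` points, so some `u ∈ U` lies outside it.
The affine span of `U ∩ (x + S ⊔ ⟨u - x⟩)` contains `x + S` and `u`, so its direction contains
`S` and `u - x`, and it therefore contains the whole coset `x + (S ⊔ ⟨u - x⟩)`.
-/

open Pointwise

section

variable {F V : Type*} [Field F] [AddCommGroup V] [Module F V]

theorem AffineSubspace.vadd_set_subset_iff_le_direction {A : AffineSubspace F V} {x : V}
    (hx : x ∈ A) (W : Submodule F V) : x +ᵥ (W : Set V) ⊆ A ↔ W ≤ A.direction := by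
  constructor
  · intro h w hw
    simpa using A.vsub_mem_direction (h ⟨w, hw, rfl⟩) hx
  · rintro h _ ⟨w, hw, rfl⟩
    simpa [vadd_eq_add, add_comm] using A.vadd_mem_of_mem_direction (h hw) hx

theorem isDeterminedBy_sup_span_singleton {U : Set V} {S : Submodule F V} {x u : V}
    (hx : x +ᵥ (S : Set V) ⊆ affineSpan F (U ∩ (x +ᵥ (S : Set V)))) (hu : u ∈ U) :
    IsDeterminedBy U (S ⊔ F ∙ (u - x)) := by
  set A := affineSpan F (U ∩ (x +ᵥ ((S ⊔ F ∙ (u - x) : Submodule F V) : Set V)))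
  have hSA : x +ᵥ (S : Set V) ⊆ A :=
    hx.trans <| affineSpan_mono F <| Set.inter_subset_inter_right U <|
      Set.vadd_set_mono (SetLike.coe_subset_coe.2 le_sup_left)
  have hxA : x ∈ A := hSA ⟨0, S.zero_mem, add_zero x⟩
  have huA : u ∈ A := subset_affineSpan F _
    ⟨hu, u - x, Submodule.mem_sup_right (Submodule.mem_span_singleton_self _), by simp⟩
  refine ⟨x, (A.vadd_set_subset_iff_le_direction hxA _).2 (sup_le ?_ ?_)⟩
  · exact (A.vadd_set_subset_iff_le_direction hxA S).1 hSA
  · exact (Submodule.span_singleton_le_iff_mem _ _).2 (A.vsub_mem_direction huA hxA)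

theorem Submodule.ncard_eq_pow_finrank [Finite F] [Finite V] (S : Submodule F V) :
    (S : Set V).ncard = Nat.card F ^ Module.finrank F S := by
  have := Fintype.ofFinite F
  have := Fintype.ofFinite S
  rw [← Nat.card_coe_set_eq, SetLike.coe_sort_coe, Nat.card_eq_fintype_card,
    Module.card_eq_pow_finrank (K := F), Nat.card_eq_fintype_card]

theorem IsDeterminedBy.exists_finrank_succ [Finite V] {U : Set V} {S : Submodule F V}
    (hdet : IsDeterminedBy U S) (hcard : (S : Set V).ncard < U.ncard) :
    ∃ S' : Submodule F V, S ≤ S' ∧ Module.finrank F S' = Module.finrank F S + 1 ∧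
      IsDeterminedBy U S' := by
  obtain ⟨x, hx⟩ := hdet
  obtain ⟨u, hu, hux⟩ := Set.exists_mem_notMem_of_ncard_lt_ncard
    (s := x +ᵥ (S : Set V)) (t := U) (by rwa [Set.ncard_vadd_set])
  have huxS : u - x ∉ S := fun h => hux ⟨u - x, h, by simp⟩
  exact ⟨_, le_sup_left, Submodule.finrank_sup_span_singleton huxS,
    isDeterminedBy_sup_span_singleton hx hu⟩

end

/-- If `|U| = q^(n-1)` and `U` determines the `k`-subspace at infinity
corresponding to `S` (`k ≤ n-3`), then it also determines some `(k+1)`-subspace at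
infinity through it. -/
theorem stmt_4 {F : Type*} [Field F] [Fintype F] {q n k : ℕ}
    (hq : Fintype.card F = q) (hn : 3 ≤ n) (hk : k ≤ n - 3)
    (U : Set (Fin n → F)) (hU : U.ncard = q ^ (n - 1))
    (S : Submodule F (Fin n → F)) (hS : Module.finrank F S = k + 1)
    (hdet : IsDeterminedBy U S) :
    ∃ S' : Submodule F (Fin n → F), S ≤ S' ∧ Module.finrank F S' = k + 2 ∧
      IsDeterminedBy U S' := by
  have hcard : (S : Set (Fin n → F)).ncard < U.ncard := by
    rw [S.ncard_eq_pow_finrank, Nat.card_eq_fintype_card, hq, hS, hU]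
    exact Nat.pow_lt_pow_right (hq ▸ Fintype.one_lt_card) (by omega)
  simpa only [hS] using hdet.exists_finrank_succ hcard
end

section
/- Let F be a finite field with q elements, n ≥ 3, and let U ⊆ F^n with |U| = q^(n−1). Let k be an integer with 0 ≤ k ≤ n−3, and let V be an (n−1)-dimensional F-linear subspace of F^n. If every (k+1)-dimensional F-linear subspace contained in V corresponds to a k-subspace at infinity determined by U, then the (n−2)-subspace at infinity corresponding to V is determined by U as well. -/
/-!
Suppose the hyperplane at infinity of `V` is undetermined. Then in each of the (at most `q`)
cosets `x + V`, the points of `U` span an affine subspace whose direction is a proper subspace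
of `V`. A vector space over `𝔽_q` is not the union of `q` proper subspaces, so some `v ∈ V` lies
in none of these directions. Any `(k+1)`-dimensional `T ≤ V` through `v` is determined in some
coset `y + T ⊆ y + V`, which forces `T`, and hence `v`, into the direction belonging to `y + V`.
-/

open Pointwise

open Module Set

section

variable {F M : Type*} [Field F] [AddCommGroup M] [Module F M]

namespace Submodule

theorem exists_mem_forall_notMem_of_card_le [Finite F] [Module.Finite F M] {ι : Type*} [Finite ι]
    (hι : Nat.card ι ≤ Nat.card F) {V : Submodule F M} {D : ι → Submodule F M}
    (hD : ∀ i, D i < V) : ∃ v ∈ V, ∀ i, v ∉ D i := by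
  -- A proper subspace of `V` has at most `q ^ (m - 1) - 1` nonzero vectors, and
  -- `q * (q ^ (m - 1) - 1) < q ^ m - 1`.
  rcases isEmpty_or_nonempty ι with hι₀ | ⟨⟨i₀⟩⟩
  · exact ⟨0, V.zero_mem, isEmptyElim⟩
  by_contra! hcover
  have := Fintype.ofFinite ι
  have : Finite M := Module.finite_of_finite F
  set q := Nat.card F
  set m := finrank F V
  have hq : 2 ≤ q := Finite.one_lt_card
  have hm : 0 < m := (finrank_lt_finrank_of_lt (hD i₀)).trans_le' (Nat.zero_le _)
  have hcard (W : Submodule F M) : ((W : Set M) \ {0}).ncard = q ^ finrank F W - 1 := by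
    rw [ncard_sdiff_singleton_of_mem W.zero_mem, ← Nat.card_coe_set_eq, ← natCard_eq_pow_finrank]
    rfl
  have hcover' : (V : Set M) \ {0} ⊆ ⋃ i, (D i : Set M) \ {0} := by
    rintro v ⟨hv, hv0⟩
    obtain ⟨i, hi⟩ := hcover v hv
    exact mem_iUnion.2 ⟨i, hi, hv0⟩
  have hD' (i : ι) : ((D i : Set M) \ {0}).ncard ≤ q ^ (m - 1) - 1 := by
    rw [hcard]
    have := finrank_lt_finrank_of_lt (hD i)
    gcongr <;> omega
  have key : q ^ m - 1 ≤ q * (q ^ (m - 1) - 1) :=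
    calc q ^ m - 1 = ((V : Set M) \ {0}).ncard := (hcard V).symm
      _ ≤ ∑ i, ((D i : Set M) \ {0}).ncard :=
        (ncard_le_ncard hcover').trans (ncard_iUnion_le_of_fintype _)
      _ ≤ ∑ _i : ι, (q ^ (m - 1) - 1) := Finset.sum_le_sum fun i _ ↦ hD' i
      _ ≤ q * (q ^ (m - 1) - 1) := by
        rw [Finset.sum_const, smul_eq_mul, Finset.card_univ, ← Nat.card_eq_fintype_card]
        gcongr
  have hqm : q ^ m = q * q ^ (m - 1) := by rw [← pow_succ', Nat.sub_add_cancel hm]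
  have : 1 ≤ q ^ (m - 1) := Nat.one_le_pow _ _ (by omega)
  rw [hqm, Nat.mul_sub, mul_one] at key
  have : q ≤ q * q ^ (m - 1) := Nat.le_mul_of_pos_right _ this
  omega

theorem exists_le_le_finrank_eq [Module.Finite F M] {S V : Submodule F M} (hSV : S ≤ V) {d : ℕ}
    (hSd : finrank F S ≤ d) (hdV : d ≤ finrank F V) :
    ∃ T, S ≤ T ∧ T ≤ V ∧ finrank F T = d := by
  obtain ⟨j, rfl⟩ := Nat.exists_eq_add_of_le hSd
  induction j generalizing S with
  | zero => exact ⟨S, le_rfl, hSV, rfl⟩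
  | succ j ih =>
    obtain ⟨x, hxV, hxS⟩ := SetLike.exists_of_lt <|
      lt_of_le_of_ne hSV fun h ↦ by subst h; omega
    have hS' := finrank_sup_span_singleton hxS
    obtain ⟨T, hST, hTV, hT⟩ := ih (sup_le hSV ((span_singleton_le_iff_mem x V).2 hxV))
      (by omega) (by omega)
    exact ⟨T, le_sup_left.trans hST, hTV, by omega⟩

theorem sub_mem_of_mem_vadd (S : Submodule F M) {x a b : M} (ha : a ∈ x +ᵥ (S : Set M))
    (hb : b ∈ x +ᵥ (S : Set M)) : a - b ∈ S := by
  obtain ⟨a, ha, rfl⟩ := ha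
  obtain ⟨b, hb, rfl⟩ := hb
  simpa using S.sub_mem ha hb

theorem vadd_eq_vadd_of_sub_mem (S : Submodule F M) {x y : M} (h : x - y ∈ S) :
    x +ᵥ (S : Set M) = y +ᵥ (S : Set M) :=
  (leftAddCoset_eq_iff S.toAddSubgroup).2 <| by simpa [neg_add_eq_sub] using S.neg_mem h

end Submodule

variable (U : Set M) (S : Submodule F M)

theorem vectorSpan_inter_vadd_le (x : M) : vectorSpan F (U ∩ (x +ᵥ (S : Set M))) ≤ S := by
  rw [vectorSpan_def, Submodule.span_le]
  rintro _ ⟨a, ha, b, hb, rfl⟩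
  exact S.sub_mem_of_mem_vadd ha.2 hb.2

variable {U S}

theorem vectorSpan_inter_vadd_lt_of_not_isDeterminedBy (hU : ¬IsDeterminedBy U S) (hS : S ≠ ⊥)
    (x : M) : vectorSpan F (U ∩ (x +ᵥ (S : Set M))) < S := by
  refine (vectorSpan_inter_vadd_le U S x).lt_of_ne fun heq ↦ hU ⟨x, fun z hz ↦ ?_⟩
  rcases (U ∩ (x +ᵥ (S : Set M))).eq_empty_or_nonempty with he | ⟨u, hu⟩
  · exact (hS (by rw [← heq, he, vectorSpan_empty])).elim
  have hzu : z -ᵥ u ∈ (affineSpan F (U ∩ (x +ᵥ (S : Set M)))).direction := by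
    rw [direction_affineSpan, heq]
    exact S.sub_mem_of_mem_vadd hz hu.2
  simpa using AffineSubspace.vadd_mem_of_mem_direction hzu (subset_affineSpan F _ hu)

theorem IsDeterminedBy.exists_le_vectorSpan {T : Submodule F M} (hT : IsDeterminedBy U T)
    (hTS : T ≤ S) : ∃ y : M, T ≤ vectorSpan F (U ∩ (y +ᵥ (S : Set M))) := by
  obtain ⟨y, hy⟩ := hT
  have hspan : affineSpan F (U ∩ (y +ᵥ (T : Set M))) ≤ affineSpan F (U ∩ (y +ᵥ (S : Set M))) :=
    affineSpan_mono F (inter_subset_inter_right U (vadd_set_mono (a := y) (SetLike.coe_mono hTS)))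
  have hmem (z : M) (hz : z ∈ T) : z + y ∈ affineSpan F (U ∩ (y +ᵥ (S : Set M))) :=
    hspan (hy ⟨z, hz, add_comm ..⟩)
  refine ⟨y, fun w hw ↦ ?_⟩
  rw [← direction_affineSpan]
  simpa using AffineSubspace.vsub_mem_direction (hmem w hw) (hmem 0 T.zero_mem)

theorem IsDeterminedBy.of_forall_finrank_eq [Finite F] [Module.Finite F M] {U : Set M}
    {V : Submodule F M} (hV : Nat.card (M ⧸ V) ≤ Nat.card F) {d : ℕ} (hd : d ≠ 0)
    (hdV : d ≤ finrank F V) (hall : ∀ T ≤ V, finrank F T = d → IsDeterminedBy U T) :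
    IsDeterminedBy U V := by
  by_contra hU
  have : Finite (M ⧸ V) := Module.finite_of_finite F
  have hV0 : V ≠ ⊥ := by rintro rfl; rw [finrank_bot] at hdV; omega
  -- The direction spanned by `U` in a coset of `V` depends only on the coset.
  obtain ⟨v, hvV, hv⟩ := V.exists_mem_forall_notMem_of_card_le hV
    (D := fun c : M ⧸ V ↦ vectorSpan F (U ∩ (c.out +ᵥ (V : Set M))))
    fun c ↦ vectorSpan_inter_vadd_lt_of_not_isDeterminedBy hU hV0 _
  have hv1 : finrank F (F ∙ v) ≤ d :=
    (finrank_span_le_card {v}).trans (by simpa using Nat.one_le_iff_ne_zero.2 hd)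
  obtain ⟨T, hvT, hTV, hT⟩ :=
    Submodule.exists_le_le_finrank_eq ((Submodule.span_singleton_le_iff_mem v V).2 hvV) hv1 hdV
  obtain ⟨y, hy⟩ := (hall T hTV hT).exists_le_vectorSpan hTV
  refine hv (Submodule.Quotient.mk y) ?_
  rw [V.vadd_eq_vadd_of_sub_mem ((Submodule.Quotient.eq V).1 (Quotient.out_eq _))]
  exact hy (hvT (Submodule.mem_span_singleton_self v))

end

theorem stmt_6_general {F : Type*} [Field F] [Fintype F] {n k : ℕ}
    (hn : 3 ≤ n) (hk : k ≤ n - 3)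
    (U : Set (Fin n → F))
    (V : Submodule F (Fin n → F)) (hV : Module.finrank F V = n - 1)
    (hall : ∀ T : Submodule F (Fin n → F), T ≤ V → Module.finrank F T = k + 1 →
      IsDeterminedBy U T) :
    IsDeterminedBy U V := by
  have hquot : finrank F ((Fin n → F) ⧸ V) = 1 := by
    have := V.finrank_quotient_add_finrank
    rw [finrank_fin_fun, hV] at this
    omega
  refine IsDeterminedBy.of_forall_finrank_eq ?_ k.succ_ne_zero (by omega) hall
  rw [natCard_eq_pow_finrank (K := F), hquot, pow_one]

/-- If `|U| = q^(n-1)` and all `k`-subspaces at infinity inside the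
`(n-2)`-subspace at infinity corresponding to `V` are determined by `U` (`k ≤ n-3`),
then that `(n-2)`-subspace is determined as well. -/
theorem stmt_6 {F : Type*} [Field F] [Fintype F] {q n k : ℕ}
    (hq : Fintype.card F = q) (hn : 3 ≤ n) (hk : k ≤ n - 3)
    (U : Set (Fin n → F)) (hU : U.ncard = q ^ (n - 1))
    (V : Submodule F (Fin n → F)) (hV : Module.finrank F V = n - 1)
    (hall : ∀ T : Submodule F (Fin n → F), T ≤ V → Module.finrank F T = k + 1 →
      IsDeterminedBy U T) :
    IsDeterminedBy U V :=
  stmt_6_general hn hk U V hV hall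
end

section
/- Let F be a finite field with q elements and let U ⊆ F³ with |U| = q². Let S₁ ≠ S₂ be two 2-dimensional F-linear subspaces of F³ whose corresponding lines at infinity are both undetermined by U, and let M = S₁ ∩ S₂ (a 1-dimensional subspace). Let f and g be affine lines whose point sets are contained in U, such that the direction of f is contained in S₁ and the direction of g is contained in S₂. Then either f and g have a common point, or the directions of f and g are both equal to M. -/
/-!
If the plane direction `S` is undetermined by `U` and `U` contains a line `ℓ` with direction
in `S`, then `U` meets the plane through `ℓ` parallel to `S` only in `ℓ`: the affine span of
that intersection is a subspace of the plane containing `ℓ`, and it cannot be the whole plane.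
Any line of `U` whose direction is not in `S` crosses this plane, hence crosses `ℓ`. So `f` and
`g` meet unless the direction of `g` lies in `S₁` and that of `f` in `S₂`, i.e. both are `M`.
-/

open Pointwise

open Module AffineSubspace

section

variable {F V : Type*} [Field F] [AddCommGroup V] [Module F V]

theorem Submodule.covBy_of_finrank_add_one_eq [FiniteDimensional F V] {D S : Submodule F V}
    (hDS : D ≤ S) (h : finrank F D + 1 = finrank F S) : D ⋖ S := by
  refine ⟨lt_of_le_of_ne hDS fun hDS' => by subst hDS'; omega, fun E hDE hES => ?_⟩
  have := Submodule.finrank_lt_finrank_of_lt hDE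
  have := Submodule.finrank_lt_finrank_of_lt hES
  omega

theorem AffineSubspace.coe_mk'_eq_vadd (p : V) (S : Submodule F V) :
    (mk' p S : Set V) = p +ᵥ (S : Set V) := by
  ext y
  simp [mem_mk', mem_leftAddCoset_iff, neg_add_eq_sub]

theorem inter_mk'_subset_of_not_isDeterminedBy {U : Set V} {S D : Submodule F V} {p : V}
    (hnd : ¬ IsDeterminedBy U S) (hDS : D ⋖ S) (hline : (mk' p D : Set V) ⊆ U) :
    U ∩ mk' p S ⊆ mk' p D := by
  set A := affineSpan F (U ∩ (mk' p S : Set V))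
  have hlineA : mk' p D ≤ A := fun y hy =>
    subset_affineSpan F _ ⟨hline hy, (mk'_le_mk'_iff p).2 hDS.le hy⟩
  have hpA : p ∈ A := hlineA (self_mem_mk' p D)
  have hAS : A.direction ≤ S := by
    simpa using direction_le (affineSpan_le.2 Set.inter_subset_right : A ≤ mk' p S)
  have hDA : D ≤ A.direction := by simpa using direction_le hlineA
  rcases hDS.eq_or_eq hDA hAS with hAD | hAS'
  · rw [← hAD, mk'_eq hpA]
    exact subset_affineSpan F _
  · have hA : A = mk' p S := by rw [← hAS', mk'_eq hpA]
    refine absurd ⟨p, ?_⟩ hnd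
    rw [← coe_mk'_eq_vadd]
    exact hA.symm.le

theorem mk'_inter_mk'_nonempty_of_not_isDeterminedBy {U : Set V} {S D₁ D₂ : Submodule F V}
    {p₁ p₂ : V} (hnd : ¬ IsDeterminedBy U S) (hD₁S : D₁ ⋖ S) (hS : S ⋖ ⊤) (hD₂S : ¬ D₂ ≤ S)
    (h₁ : (mk' p₁ D₁ : Set V) ⊆ U) (h₂ : (mk' p₂ D₂ : Set V) ⊆ U) :
    ((mk' p₁ D₁ : Set V) ∩ mk' p₂ D₂).Nonempty := by
  have hsup : D₂ ⊔ S = ⊤ :=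
    (hS.eq_or_eq le_sup_right le_top).resolve_left fun h => hD₂S (h ▸ le_sup_left)
  obtain ⟨d, hd, s, hs, hds⟩ :=
    Submodule.mem_sup.1 (hsup ▸ Submodule.mem_top : p₁ - p₂ ∈ D₂ ⊔ S)
  have hy₂ : d +ᵥ p₂ ∈ mk' p₂ D₂ := vadd_mem_mk' p₂ hd
  have hy₁ : d +ᵥ p₂ ∈ mk' p₁ S := by
    have : d + p₂ - p₁ = -s := by
      rw [eq_neg_iff_add_eq_zero, show d + p₂ - p₁ + s = (d + s) - (p₁ - p₂) by abel, hds,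
        sub_self]
    rw [mem_mk', vadd_eq_add, vsub_eq_sub, this]
    exact S.neg_mem hs
  exact ⟨_, inter_mk'_subset_of_not_isDeterminedBy hnd hD₁S h₁ ⟨h₂ hy₂, hy₁⟩, hy₂⟩

theorem Submodule.eq_inf_of_covBy [FiniteDimensional F V] {D S₁ S₂ : Submodule F V}
    (hne : S₁ ≠ S₂) (h : finrank F S₁ = finrank F S₂) (hD₁ : D ⋖ S₁) (hD₂ : D ≤ S₂) :
    D = S₁ ⊓ S₂ :=
  ((hD₁.eq_or_eq (le_inf hD₁.le hD₂) inf_le_left).resolve_right fun hinf =>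
    hne (eq_of_le_of_finrank_eq (hinf ▸ inf_le_right) h)).symm

end

theorem stmt_9_general {F : Type*} [Field F]
    (U : Set (Fin 3 → F))
    (S₁ S₂ : Submodule F (Fin 3 → F)) (hne : S₁ ≠ S₂)
    (hS₁ : Module.finrank F S₁ = 2) (hS₂ : Module.finrank F S₂ = 2)
    (hnd₁ : ¬ IsDeterminedBy U S₁) (hnd₂ : ¬ IsDeterminedBy U S₂)
    (M : Submodule F (Fin 3 → F)) (hM : M = S₁ ⊓ S₂)
    (pf pg : Fin 3 → F) (Df Dg : Submodule F (Fin 3 → F))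
    (hDf : Module.finrank F Df = 1) (hDg : Module.finrank F Dg = 1)
    (hDfS : Df ≤ S₁) (hDgS : Dg ≤ S₂)
    (hf : pf +ᵥ (Df : Set (Fin 3 → F)) ⊆ U)
    (hg : pg +ᵥ (Dg : Set (Fin 3 → F)) ⊆ U) :
    ((pf +ᵥ (Df : Set (Fin 3 → F))) ∩ (pg +ᵥ (Dg : Set (Fin 3 → F)))).Nonempty ∨
      (Df = M ∧ Dg = M) := by
  subst hM
  have hS₁top : S₁ ⋖ ⊤ :=
    Submodule.covBy_of_finrank_add_one_eq le_top (by rw [finrank_top, hS₁, finrank_fin_fun])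
  have hS₂top : S₂ ⋖ ⊤ :=
    Submodule.covBy_of_finrank_add_one_eq le_top (by rw [finrank_top, hS₂, finrank_fin_fun])
  have hDfS₁ : Df ⋖ S₁ := Submodule.covBy_of_finrank_add_one_eq hDfS (by rw [hDf, hS₁])
  have hDgS₂ : Dg ⋖ S₂ := Submodule.covBy_of_finrank_add_one_eq hDgS (by rw [hDg, hS₂])
  simp only [← coe_mk'_eq_vadd] at hf hg ⊢
  by_cases hg₁ : Dg ≤ S₁
  · by_cases hf₂ : Df ≤ S₂
    · refine Or.inr ⟨Submodule.eq_inf_of_covBy hne (hS₁.trans hS₂.symm) hDfS₁ hf₂, ?_⟩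
      rw [inf_comm]
      exact Submodule.eq_inf_of_covBy hne.symm (hS₂.trans hS₁.symm) hDgS₂ hg₁
    · rw [Set.inter_comm]
      exact Or.inl (mk'_inter_mk'_nonempty_of_not_isDeterminedBy hnd₂ hDgS₂ hS₂top hf₂ hg hf)
  · exact Or.inl (mk'_inter_mk'_nonempty_of_not_isDeterminedBy hnd₁ hDfS₁ hS₁top hg₁ hf hg)

/-- Lemma 2 in the paper: with two undetermined lines at infinity
corresponding to `S₁ ≠ S₂` meeting at `M = S₁ ∩ S₂`, two affine lines `f ⊆ U`, `g ⊆ U`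
with directions in `S₁` resp. `S₂` either meet, or both have direction `M`. -/
theorem stmt_9 {F : Type*} [Field F] [Fintype F] {q : ℕ}
    (hq : Fintype.card F = q)
    (U : Set (Fin 3 → F)) (hU : U.ncard = q ^ 2)
    (S₁ S₂ : Submodule F (Fin 3 → F)) (hne : S₁ ≠ S₂)
    (hS₁ : Module.finrank F S₁ = 2) (hS₂ : Module.finrank F S₂ = 2)
    (hnd₁ : ¬ IsDeterminedBy U S₁) (hnd₂ : ¬ IsDeterminedBy U S₂)
    (M : Submodule F (Fin 3 → F)) (hM : M = S₁ ⊓ S₂)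
    (pf pg : Fin 3 → F) (Df Dg : Submodule F (Fin 3 → F))
    (hDf : Module.finrank F Df = 1) (hDg : Module.finrank F Dg = 1)
    (hDfS : Df ≤ S₁) (hDgS : Dg ≤ S₂)
    (hf : pf +ᵥ (Df : Set (Fin 3 → F)) ⊆ U)
    (hg : pg +ᵥ (Dg : Set (Fin 3 → F)) ⊆ U) :
    ((pf +ᵥ (Df : Set (Fin 3 → F))) ∩ (pg +ᵥ (Dg : Set (Fin 3 → F)))).Nonempty ∨
      (Df = M ∧ Dg = M) :=
  stmt_9_general U S₁ S₂ hne hS₁ hS₂ hnd₁ hnd₂ M hM pf pg Df Dg hDf hDg hDfS hDgS hf hg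
end

section
/- Let F be a finite field with q elements and let U ⊆ F³ with |U| = q². Let S₁ ≠ S₂ be two 2-dimensional F-linear subspaces of F³ whose corresponding lines at infinity are both undetermined by U, and let M = S₁ ∩ S₂ (a 1-dimensional subspace). If there exists an affine line f contained in U whose direction is M, then every affine line g contained in U whose direction is contained in S₁ has direction M. -/
/-! If the line at infinity of a plane direction `S` is undetermined by `U`, every coset `x + S`
meets `U` in a set that does not span it, hence lies on an affine line and has at most `q`
points. There are `q` such cosets and `|U| = q²`, so each meets `U` in exactly `q` points: a line
of `U` with direction in `S` is the whole trace of `U` on its plane.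

If the direction of `g` is not in `S₂`, then `g` meets the `S₂`-plane through `f` in a point `r`,
which lies in `U` and hence on `f`. The `S₁`-plane through `r` then has trace both `g` and `f`,
so `g = f`. -/

open Pointwise

lemma Set.ncard_eq_sum_ncard_inter_preimage {α β : Type*} [Fintype β] {U : Set α}
    (hU : U.Finite) (f : α → β) : U.ncard = ∑ b, (U ∩ f ⁻¹' {b}).ncard := by
  classical
  rw [Set.ncard_eq_toFinset_card U hU,
    Finset.card_eq_sum_card_fiberwise (f := f) (t := Finset.univ) (fun _ _ ↦ Finset.mem_univ _)]
  refine Finset.sum_congr rfl fun b _ ↦ ?_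
  rw [← Set.ncard_coe_finset]
  congr 1
  ext
  simp

namespace Submodule

variable {F V : Type*} [Field F] [AddCommGroup V] [Module F V]

lemma mem_vadd_coe_iff_s10 {S : Submodule F V} {x z : V} :
    z ∈ x +ᵥ (S : Set V) ↔ z - x ∈ S := by
  rw [mem_leftAddCoset_iff, neg_add_eq_sub, SetLike.mem_coe]

lemma vadd_coe_eq_of_mem {S : Submodule F V} {x z : V} (h : z ∈ x +ᵥ (S : Set V)) :
    z +ᵥ (S : Set V) = x +ᵥ (S : Set V) := by
  ext y
  rw [mem_vadd_coe_iff_s10, mem_vadd_coe_iff_s10]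
  have hzx := mem_vadd_coe_iff_s10.1 h
  constructor
  · intro hy; simpa using S.add_mem hy hzx
  · intro hy; simpa using S.sub_mem hy hzx

lemma vadd_inter_vadd_nonempty_of_sup_eq_top {D S : Submodule F V} (h : D ⊔ S = ⊤) (x y : V) :
    ((x +ᵥ (D : Set V)) ∩ (y +ᵥ (S : Set V))).Nonempty := by
  obtain ⟨d, hd, s, hs, hds⟩ := mem_sup.1 (h ▸ mem_top : y - x ∈ D ⊔ S)
  refine ⟨y - s, mem_vadd_coe_iff_s10.2 ?_, mem_vadd_coe_iff_s10.2 (by simpa using S.neg_mem hs)⟩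
  rwa [sub_right_comm, ← hds, add_sub_cancel_right]

lemma subset_vadd_vectorSpan {T : Set V} {a : V} (ha : a ∈ T) :
    T ⊆ a +ᵥ (vectorSpan F T : Set V) :=
  fun _ ht ↦ mem_vadd_coe_iff_s10.2 (vsub_mem_vectorSpan F ht ha)

section FiniteDimensional

variable [FiniteDimensional F V]

lemma sup_eq_top_of_not_le {D S : Submodule F V}
    (hS : Module.finrank F S + 1 = Module.finrank F V) (h : ¬ D ≤ S) : D ⊔ S = ⊤ := by
  have hlt : S < D ⊔ S := lt_of_le_of_ne le_sup_right fun he ↦ h (he ▸ le_sup_left)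
  apply eq_top_of_finrank_eq
  have := finrank_lt_finrank_of_lt hlt
  have := finrank_le (D ⊔ S)
  omega

lemma finrank_inf_of_ne {k : ℕ} {S₁ S₂ : Submodule F V} (hV : Module.finrank F V = k + 2)
    (h₁ : Module.finrank F S₁ = k + 1) (h₂ : Module.finrank F S₂ = k + 1) (hne : S₁ ≠ S₂) :
    Module.finrank F ↥(S₁ ⊓ S₂) = k := by
  have hnle : ¬ S₁ ≤ S₂ := fun hle ↦ hne (eq_of_le_of_finrank_eq hle (h₁.trans h₂.symm))
  have htop := sup_eq_top_of_not_le (by omega) hnle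
  have := finrank_sup_add_finrank_inf_eq S₁ S₂
  rw [htop, finrank_top] at this
  omega

end FiniteDimensional

variable [Fintype F] [Finite V]

lemma ncard_vadd_coe (x : V) (S : Submodule F V) :
    (x +ᵥ (S : Set V)).ncard = Fintype.card F ^ Module.finrank F S := by
  rw [Set.ncard_vadd_set, ← Nat.card_coe_set_eq, SetLike.coe_sort_coe,
    Module.natCard_eq_pow_finrank (K := F), Nat.card_eq_fintype_card]

lemma vadd_coe_eq_inter_of_vadd_coe_subset {U : Set V} {D S : Submodule F V} {p : V}
    (hDS : D ≤ S) (hD : p +ᵥ (D : Set V) ⊆ U)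
    (hcard : (U ∩ (p +ᵥ (S : Set V))).ncard ≤ Fintype.card F ^ Module.finrank F D) :
    p +ᵥ (D : Set V) = U ∩ (p +ᵥ (S : Set V)) :=
  Set.eq_of_subset_of_ncard_le (Set.subset_inter hD (Set.vadd_set_mono hDS))
    (by rwa [ncard_vadd_coe]) (Set.toFinite _)

end Submodule

section Undetermined

open Submodule

variable {F V : Type*} [Field F] [AddCommGroup V] [Module F V] {U : Set V} {S : Submodule F V}

lemma vectorSpan_lt_of_not_isDeterminedBy (hnd : ¬ IsDeterminedBy U S) {x a : V}
    (ha : a ∈ U ∩ (x +ᵥ (S : Set V))) : vectorSpan F (U ∩ (x +ᵥ (S : Set V))) < S := by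
  have hax := vadd_coe_eq_of_mem ha.2
  rw [← hax] at ha ⊢
  have hle : vectorSpan F (U ∩ (a +ᵥ (S : Set V))) ≤ S := by
    rw [vectorSpan_def, span_le]
    rintro _ ⟨t, ht, u, hu, rfl⟩
    simpa using S.sub_mem (mem_vadd_coe_iff_s10.1 ht.2) (mem_vadd_coe_iff_s10.1 hu.2)
  refine lt_of_le_of_ne hle fun heq ↦ hnd ⟨a, fun z hz ↦ ?_⟩
  have hza : z -ᵥ a ∈ (affineSpan F (U ∩ (a +ᵥ (S : Set V)))).direction := by
    rw [direction_affineSpan, heq]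
    exact mem_vadd_coe_iff_s10.1 hz
  simpa using AffineSubspace.vadd_mem_of_mem_direction hza (mem_affineSpan F ha)

variable [Fintype F] [Finite V]

lemma ncard_inter_vadd_le_of_not_isDeterminedBy (hnd : ¬ IsDeterminedBy U S) (x : V) :
    (U ∩ (x +ᵥ (S : Set V))).ncard ≤ Fintype.card F ^ (Module.finrank F S - 1) := by
  rcases (U ∩ (x +ᵥ (S : Set V))).eq_empty_or_nonempty with h | ⟨a, ha⟩
  · simp [h]
  have hrank := finrank_lt_finrank_of_lt (vectorSpan_lt_of_not_isDeterminedBy hnd ha)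
  calc (U ∩ (x +ᵥ (S : Set V))).ncard
      ≤ (a +ᵥ (vectorSpan F (U ∩ (x +ᵥ (S : Set V))) : Set V)).ncard :=
        Set.ncard_le_ncard (subset_vadd_vectorSpan ha) (Set.toFinite _)
    _ = Fintype.card F ^ Module.finrank F (vectorSpan F (U ∩ (x +ᵥ (S : Set V)))) :=
        ncard_vadd_coe _ _
    _ ≤ Fintype.card F ^ (Module.finrank F S - 1) :=
        Nat.pow_le_pow_right Fintype.card_pos (by omega)

lemma ncard_inter_vadd_eq_of_not_isDeterminedBy {k : ℕ} (hV : Module.finrank F V = k + 2)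
    (hS : Module.finrank F S = k + 1) (hU : U.ncard = Fintype.card F ^ (k + 1))
    (hnd : ¬ IsDeterminedBy U S) (x : V) :
    (U ∩ (x +ᵥ (S : Set V))).ncard = Fintype.card F ^ k := by
  have : Finite (V ⧸ S) := Module.finite_of_finite F
  have : Fintype (V ⧸ S) := Fintype.ofFinite _
  have hfiber (y : V) : S.mkQ ⁻¹' {S.mkQ y} = y +ᵥ (S : Set V) := by
    ext z
    rw [Set.mem_preimage, Set.mem_singleton_iff, mem_vadd_coe_iff_s10]
    exact Submodule.Quotient.eq S
  have hle (c : V ⧸ S) : (U ∩ S.mkQ ⁻¹' {c}).ncard ≤ Fintype.card F ^ k := by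
    obtain ⟨y, rfl⟩ := S.mkQ_surjective c
    have := ncard_inter_vadd_le_of_not_isDeterminedBy hnd y
    rwa [hS, Nat.add_sub_cancel, ← hfiber] at this
  have hcardQ : Fintype.card (V ⧸ S) = Fintype.card F := by
    have := S.finrank_quotient_add_finrank
    rw [Module.card_eq_pow_finrank (K := F), show Module.finrank F (V ⧸ S) = 1 by omega, pow_one]
  have hsum : ∑ c : V ⧸ S, (U ∩ S.mkQ ⁻¹' {c}).ncard = ∑ _c : V ⧸ S, Fintype.card F ^ k := by
    rw [← Set.ncard_eq_sum_ncard_inter_preimage (Set.toFinite U), hU, Finset.sum_const,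
      Finset.card_univ, hcardQ, smul_eq_mul, pow_succ']
  rw [← hfiber x]
  exact (Finset.sum_eq_sum_iff_of_le fun c _ ↦ hle c).1 hsum _ (Finset.mem_univ _)

end Undetermined

open Submodule in
/-- Lemma 3 in the paper: with two undetermined lines at infinity
corresponding to `S₁ ≠ S₂` meeting at `M = S₁ ∩ S₂`, if some affine line contained in `U`
has direction `M`, then every affine line contained in `U` with direction in `S₁` has
direction `M`. -/
theorem stmt_10 {F : Type*} [Field F] [Fintype F] {q : ℕ}
    (hq : Fintype.card F = q)
    (U : Set (Fin 3 → F)) (hU : U.ncard = q ^ 2)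
    (S₁ S₂ : Submodule F (Fin 3 → F)) (hne : S₁ ≠ S₂)
    (hS₁ : Module.finrank F S₁ = 2) (hS₂ : Module.finrank F S₂ = 2)
    (hnd₁ : ¬ IsDeterminedBy U S₁) (hnd₂ : ¬ IsDeterminedBy U S₂)
    (M : Submodule F (Fin 3 → F)) (hM : M = S₁ ⊓ S₂)
    (hf : ∃ pf : Fin 3 → F, pf +ᵥ (M : Set (Fin 3 → F)) ⊆ U) :
    ∀ (pg : Fin 3 → F) (Dg : Submodule F (Fin 3 → F)),
      Module.finrank F Dg = 1 → Dg ≤ S₁ →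
      pg +ᵥ (Dg : Set (Fin 3 → F)) ⊆ U → Dg = M := by
  intro pg Dg hDg hDgS₁ hg
  obtain ⟨pf, hf⟩ := hf
  subst hq
  have hV : Module.finrank F (Fin 3 → F) = 1 + 2 := Module.finrank_fin_fun F
  have hM₁ : Module.finrank F M = 1 := hM ▸ finrank_inf_of_ne hV hS₁ hS₂ hne
  have hcount₁ := ncard_inter_vadd_eq_of_not_isDeterminedBy hV hS₁ hU hnd₁
  have hcount₂ := ncard_inter_vadd_eq_of_not_isDeterminedBy hV hS₂ hU hnd₂
  by_cases hDgS₂ : Dg ≤ S₂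
  · exact eq_of_le_of_finrank_eq (hM ▸ le_inf hDgS₁ hDgS₂) (hDg.trans hM₁.symm)
  obtain ⟨r, hrg, hrS₂⟩ :=
    vadd_inter_vadd_nonempty_of_sup_eq_top (sup_eq_top_of_not_le (by omega) hDgS₂) pg pf
  have hfS₂ := vadd_coe_eq_inter_of_vadd_coe_subset (hM ▸ inf_le_right) hf (by rw [hcount₂, hM₁])
  have hrf : r ∈ pf +ᵥ (M : Set (Fin 3 → F)) := hfS₂ ▸ ⟨hg hrg, hrS₂⟩
  rw [← vadd_coe_eq_of_mem hrg] at hg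
  rw [← vadd_coe_eq_of_mem hrf] at hf
  have hgS₁ := vadd_coe_eq_inter_of_vadd_coe_subset hDgS₁ hg (by rw [hcount₁, hDg])
  have hfS₁ := vadd_coe_eq_inter_of_vadd_coe_subset (hM ▸ inf_le_left) hf (by rw [hcount₁, hM₁])
  exact SetLike.coe_injective (AddAction.injective r (hgS₁.trans hfS₁.symm))
end

section
/- Let F be a finite field with q elements and let U ⊆ F³ with |U| = q²; assume U is not contained in any affine plane of F³. Let S₁ ≠ S₂ be two 2-dimensional F-linear subspaces of F³ whose corresponding lines at infinity are both undetermined by U, and let M = S₁ ∩ S₂ (a 1-dimensional subspace). If f and g are two distinct parallel affine lines contained in U whose directions are contained in S₁, then their common direction is M. -/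
/-!
If the common direction `D` of the two lines lies in `S₂` as well, it lies in the line
`M = S₁ ∩ S₂` and equals it by dimension. Otherwise `D` and `S₂` span the space, so every plane
parallel to `S₂` meets both lines, in points `a` and `a + w` with `w ∈ S₂` independent of the
plane. As `S₂` is undetermined, the points of `U` on such a plane lie on the line through `a`
in direction `w`; hence `U` lies in the plane through the first line spanned by `D` and `w`.
-/

open Pointwise

open Module Submodule

section

variable {F V : Type*} [Field F] [AddCommGroup V] [Module F V]

theorem eq_inf_of_le_inf_of_finrank_add_one [FiniteDimensional F V] {D S₁ S₂ : Submodule F V}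
    (hne : S₁ ≠ S₂) (hS : finrank F S₁ = finrank F S₂) (hD : finrank F D + 1 = finrank F S₁)
    (hle : D ≤ S₁ ⊓ S₂) : D = S₁ ⊓ S₂ := by
  have hlt : S₁ ⊓ S₂ < S₁ := by
    refine inf_le_left.lt_of_ne fun h => hne ?_
    exact eq_of_le_of_finrank_eq (h ▸ inf_le_right) hS
  have := finrank_lt_finrank_of_lt hlt
  have := finrank_mono hle
  exact eq_of_le_of_finrank_eq hle (by omega)

theorem sup_eq_top_of_finrank_eq_one_of_not_le [FiniteDimensional F V] {D S : Submodule F V}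
    (hS : finrank F S + 1 = finrank F V) (hD : finrank F D = 1) (hDS : ¬ D ≤ S) :
    D ⊔ S = ⊤ := by
  obtain ⟨d, hd, hdS⟩ := SetLike.not_le_iff_exists.mp hDS
  have hd0 : d ≠ 0 := by rintro rfl; exact hdS S.zero_mem
  rw [eq_span_singleton_of_mem_of_finrank_eq_one hD hd hd0, sup_comm]
  exact eq_top_of_finrank_eq (by rw [finrank_sup_span_singleton hdS, hS])

theorem isDeterminedBy_of_span_pair_eq {U : Set V} {S : Submodule F V} {a v w : V}
    (ha : a ∈ U) (hv : a + v ∈ U) (hw : a + w ∈ U) (hspan : span F {v, w} = S) :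
    IsDeterminedBy U S := by
  refine ⟨a, ?_⟩
  set A := affineSpan F (U ∩ (a +ᵥ (S : Set V)))
  have hmem : ∀ x ∈ S, a + x ∈ U → a + x ∈ A := fun x hx hxU =>
    subset_affineSpan F _ ⟨hxU, x, hx, rfl⟩
  have hvS : v ∈ S := hspan ▸ subset_span (by simp)
  have hwS : w ∈ S := hspan ▸ subset_span (by simp)
  have haA : a ∈ A := by simpa using hmem 0 S.zero_mem (by simpa using ha)
  have hdir : S ≤ A.direction := by
    rw [← hspan, span_le, Set.insert_subset_iff, Set.singleton_subset_iff]
    constructor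
    · simpa using AffineSubspace.vsub_mem_direction (hmem v hvS hv) haA
    · simpa using AffineSubspace.vsub_mem_direction (hmem w hwS hw) haA
  rintro _ ⟨x, hx, rfl⟩
  simpa [add_comm] using AffineSubspace.vadd_mem_of_mem_direction (hdir hx) haA

theorem mem_span_singleton_of_not_isDeterminedBy [FiniteDimensional F V] {U : Set V}
    {S : Submodule F V} (hS : finrank F S = 2) (hnd : ¬ IsDeterminedBy U S) {a v w : V}
    (ha : a ∈ U) (hw : a + w ∈ U) (hv : a + v ∈ U) (hwS : w ∈ S) (hvS : v ∈ S) (hw0 : w ≠ 0) :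
    v ∈ span F {w} := by
  by_contra hvw
  refine hnd (isDeterminedBy_of_span_pair_eq ha hw hv ?_)
  rw [span_insert]
  refine eq_of_le_of_finrank_eq ?_ ?_
  · simpa [span_le, Set.insert_subset_iff] using ⟨hwS, hvS⟩
  · rw [finrank_sup_span_singleton hvw, finrank_span_singleton hw0, hS]

theorem subset_vadd_sup_span_singleton_of_not_isDeterminedBy [FiniteDimensional F V]
    {U : Set V} {D S : Submodule F V} (hS : finrank F S = 2) (hnd : ¬ IsDeterminedBy U S)
    (hsup : D ⊔ S = ⊤) {pf pg y w : V}
    (hf : pf +ᵥ (D : Set V) ⊆ U) (hg : pg +ᵥ (D : Set V) ⊆ U)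
    (hy : y ∈ D) (hwS : w ∈ S) (hw0 : w ≠ 0) (hpg : y + w = pg - pf) :
    U ⊆ pf +ᵥ ((D ⊔ span F {w} : Submodule F V) : Set V) := by
  intro u hu
  obtain ⟨z, hz, s, hs, hzs⟩ := mem_sup.mp (hsup ▸ mem_top : u - pf ∈ D ⊔ S)
  -- the plane `u + S` meets the two lines in `pf + z` and `pf + z + w`
  have ha : pf + z ∈ U := hf ⟨z, hz, rfl⟩
  have hb : pf + z + w ∈ U := hg ⟨z - y, D.sub_mem hz hy, by
    show pg + (z - y) = pf + z + w
    rw [← sub_add_cancel pg pf, ← hpg]; abel⟩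
  have hu' : pf + z + s ∈ U := by rwa [add_assoc, hzs, add_sub_cancel]
  have hsw := mem_span_singleton_of_not_isDeterminedBy hS hnd ha hb hu' hwS hs hw0
  exact ⟨z + s, add_mem (mem_sup_left hz) (mem_sup_right hsw), by
    show pf + (z + s) = u
    rw [hzs, add_sub_cancel]⟩

end

theorem stmt_11_general {F : Type*} [Field F]
    (U : Set (Fin 3 → F))
    (hplane : ¬ ∃ (x : Fin 3 → F) (P : Submodule F (Fin 3 → F)),
      Module.finrank F P = 2 ∧ U ⊆ x +ᵥ (P : Set (Fin 3 → F)))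
    (S₁ S₂ : Submodule F (Fin 3 → F)) (hne : S₁ ≠ S₂)
    (hS₁ : Module.finrank F S₁ = 2) (hS₂ : Module.finrank F S₂ = 2)
    (hnd₂ : ¬ IsDeterminedBy U S₂)
    (M : Submodule F (Fin 3 → F)) (hM : M = S₁ ⊓ S₂)
    (pf pg : Fin 3 → F) (D : Submodule F (Fin 3 → F))
    (hD : Module.finrank F D = 1) (hDS : D ≤ S₁)
    (hf : pf +ᵥ (D : Set (Fin 3 → F)) ⊆ U)
    (hg : pg +ᵥ (D : Set (Fin 3 → F)) ⊆ U)
    (hfg : pf +ᵥ (D : Set (Fin 3 → F)) ≠ pg +ᵥ (D : Set (Fin 3 → F))) :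
    D = M := by
  by_cases hDS₂ : D ≤ S₂
  · exact hM ▸ eq_inf_of_le_inf_of_finrank_add_one hne (hS₁.trans hS₂.symm) (by omega)
      (le_inf hDS hDS₂)
  exfalso
  have hsup : D ⊔ S₂ = ⊤ :=
    sup_eq_top_of_finrank_eq_one_of_not_le (by rw [hS₂, finrank_fin_fun]) hD hDS₂
  obtain ⟨y, hy, w, hw, hyw⟩ := mem_sup.mp (hsup ▸ mem_top : pg - pf ∈ D ⊔ S₂)
  have hw0 : w ≠ 0 := by
    rintro rfl
    refine hfg ((leftAddCoset_eq_iff D.toAddSubgroup).mpr ?_)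
    simpa [neg_add_eq_sub, ← hyw] using hy
  have hwD : w ∉ D := fun hwD => hDS₂ <|
    eq_span_singleton_of_mem_of_finrank_eq_one hD hwD hw0 ▸ (span_singleton_le_iff_mem _ _).mpr hw
  exact hplane ⟨pf, D ⊔ span F {w}, by rw [finrank_sup_span_singleton hwD, hD],
    subset_vadd_sup_span_singleton_of_not_isDeterminedBy hS₂ hnd₂ hsup hf hg hy hw hw0 hyw⟩

/-- Lemma 4 in the paper: assume `U` is not contained in any affine plane.
With two undetermined lines at infinity corresponding to `S₁ ≠ S₂` meeting at
`M = S₁ ∩ S₂`, two distinct parallel affine lines contained in `U` with direction in `S₁`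
must have direction `M`. -/
theorem stmt_11 {F : Type*} [Field F] [Fintype F] {q : ℕ}
    (hq : Fintype.card F = q)
    (U : Set (Fin 3 → F)) (hU : U.ncard = q ^ 2)
    (hplane : ¬ ∃ (x : Fin 3 → F) (P : Submodule F (Fin 3 → F)),
      Module.finrank F P = 2 ∧ U ⊆ x +ᵥ (P : Set (Fin 3 → F)))
    (S₁ S₂ : Submodule F (Fin 3 → F)) (hne : S₁ ≠ S₂)
    (hS₁ : Module.finrank F S₁ = 2) (hS₂ : Module.finrank F S₂ = 2)
    (hnd₁ : ¬ IsDeterminedBy U S₁) (hnd₂ : ¬ IsDeterminedBy U S₂)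
    (M : Submodule F (Fin 3 → F)) (hM : M = S₁ ⊓ S₂)
    (pf pg : Fin 3 → F) (D : Submodule F (Fin 3 → F))
    (hD : Module.finrank F D = 1) (hDS : D ≤ S₁)
    (hf : pf +ᵥ (D : Set (Fin 3 → F)) ⊆ U)
    (hg : pg +ᵥ (D : Set (Fin 3 → F)) ⊆ U)
    (hfg : pf +ᵥ (D : Set (Fin 3 → F)) ≠ pg +ᵥ (D : Set (Fin 3 → F))) :
    D = M :=
  stmt_11_general U hplane S₁ S₂ hne hS₁ hS₂ hnd₂ M hM pf pg D hD hDS hf hg hfg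
end

section
/- Let F be a finite field with q elements and let U ⊆ F³ with |U| = q²; assume U is not contained in any affine plane of F³. Let S₁ ≠ S₂ be two 2-dimensional F-linear subspaces of F³ whose corresponding lines at infinity are both undetermined by U, and let M = S₁ ∩ S₂ (a 1-dimensional subspace). If there exist two distinct parallel affine lines f, g contained in U whose directions are contained in S₁, then U + M = U, i.e. U consists of q parallel affine lines whose common direction is M. -/
/-!
If the line at infinity of `S` is undetermined by `U`, every slice `U ∩ (x + S)` is collinear and
so has at most `q` points; the `q` cosets of `S` partition the `q²` points of `U`, hence every
slice is a full affine line. Thus `U` is ruled by lines in `S₁` and by lines in `S₂`, and `f`, `g`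
are whole `S₁`-slices. If some `S₂`-slice had direction outside `S₁`, then all would: a transversal
`S₂`-slice meets every `S₁`-slice, in particular any `S₂`-slice with direction in `S₁`, and two
`S₂`-slices that meet coincide. Every `S₂`-slice would then meet `f` and `g` in two distinct points,
so `U` would lie in the plane through `f` and `g`. Hence every `S₂`-slice has direction
`S₁ ∩ S₂ = M`.
-/

open Pointwise

open Module

section Coset

variable {R V : Type*} [Ring R] [AddCommGroup V] [Module R V] {S L : Submodule R V} {x y : V}

theorem mem_vadd_submodule_iff : y ∈ x +ᵥ (S : Set V) ↔ y - x ∈ S := by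
  rw [mem_leftAddCoset_iff, neg_add_eq_sub, SetLike.mem_coe]

theorem vadd_submodule_eq_of_mem (h : y ∈ x +ᵥ (S : Set V)) :
    y +ᵥ (S : Set V) = x +ᵥ (S : Set V) := by
  ext z
  rw [mem_vadd_submodule_iff, mem_vadd_submodule_iff, ← sub_add_sub_cancel z y x]
  exact (S.add_mem_iff_left (mem_vadd_submodule_iff.1 h)).symm

theorem eq_of_vadd_submodule_eq (h : x +ᵥ (L : Set V) = y +ᵥ (S : Set V)) : L = S := by
  have hx : x ∈ y +ᵥ (S : Set V) := h ▸ mem_vadd_submodule_iff.2 (by simp)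
  rw [← vadd_submodule_eq_of_mem hx] at h
  exact SetLike.coe_injective (by simpa using congrArg ((-x) +ᵥ ·) h)

theorem exists_mem_vadd_inter_of_not_le (hS : IsCoatom S) (hL : ¬ L ≤ S) (x y : V) :
    ∃ z ∈ x +ᵥ (L : Set V), z ∈ y +ᵥ (S : Set V) := by
  have htop : S ⊔ L = ⊤ := codisjoint_iff.1 (hS.not_le_iff_codisjoint.1 hL)
  obtain ⟨s, hs, l, hl, hsl⟩ := Submodule.mem_sup.1 (htop ▸ Submodule.mem_top : y - x ∈ S ⊔ L)
  refine ⟨x + l, mem_vadd_submodule_iff.2 (by simpa using hl), mem_vadd_submodule_iff.2 ?_⟩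
  rw [show x + l - y = -s by rw [eq_sub_of_add_eq hsl]; abel]
  exact S.neg_mem hs

theorem vectorSpan_le_of_subset_vadd {A : Set V} (h : A ⊆ x +ᵥ (S : Set V)) :
    vectorSpan R A ≤ S := by
  refine Submodule.span_le.2 ?_
  rintro _ ⟨a, ha, b, hb, rfl⟩
  simpa using S.sub_mem (mem_vadd_submodule_iff.1 (h ha)) (mem_vadd_submodule_iff.1 (h hb))

theorem subset_vadd_vectorSpan {A : Set V} (hx : x ∈ A) : A ⊆ x +ᵥ (vectorSpan R A : Set V) :=
  fun _ ha => mem_vadd_submodule_iff.2 (vsub_mem_vectorSpan R ha hx)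

end Coset

theorem Set.ncard_inter_preimage_eq_of_forall_le {α β : Type*} [Finite β] {f : α → β}
    {U : Set α} (hU : U.Finite) {m : ℕ} (hcard : U.ncard = Nat.card β * m)
    (hle : ∀ b, (U ∩ f ⁻¹' {b}).ncard ≤ m) (b : β) : (U ∩ f ⁻¹' {b}).ncard = m := by
  classical
  have := Fintype.ofFinite β
  have hfiber : ∀ c, (U ∩ f ⁻¹' {c}).ncard = (hU.toFinset.filter (f · = c)).card := by
    intro c
    rw [← Set.ncard_coe_finset]
    congr 1
    ext; simp
  have hsum : ∑ c, (U ∩ f ⁻¹' {c}).ncard = ∑ _c : β, m := by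
    rw [Finset.sum_const, Finset.card_univ, smul_eq_mul, ← Nat.card_eq_fintype_card, ← hcard,
      Set.ncard_eq_toFinset_card U hU,
      Finset.card_eq_sum_card_fiberwise fun a _ => Finset.mem_univ (f a)]
    simp_rw [hfiber]
  exact (Finset.sum_eq_sum_iff_of_le fun c _ => hle c).1 hsum b (Finset.mem_univ b)

section FiniteGeometry

variable {F V : Type*} [Field F] [AddCommGroup V] [Module F V]

theorem vadd_submodule_subset_of_mem_of_mem {L T : Submodule F V} (hL : finrank F L = 1)
    {u x a b : V} (ha : a ∈ u +ᵥ (L : Set V)) (hb : b ∈ u +ᵥ (L : Set V))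
    (hab : a ≠ b) (ha' : a ∈ x +ᵥ (T : Set V)) (hb' : b ∈ x +ᵥ (T : Set V)) :
    u +ᵥ (L : Set V) ⊆ x +ᵥ (T : Set V) := by
  rw [mem_vadd_submodule_iff] at ha hb ha' hb'
  have hLT : L ≤ T := by
    rw [eq_span_singleton_of_mem_of_finrank_eq_one hL
      (by simpa using L.sub_mem hb ha) (sub_ne_zero.2 hab.symm),
      Submodule.span_singleton_le_iff_mem]
    simpa using T.sub_mem hb' ha'
  intro y hy
  rw [mem_vadd_submodule_iff] at hy ⊢
  rw [show y - x = (y - u) - (a - u) + (a - x) by abel]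
  exact T.add_mem (hLT (L.sub_mem hy ha)) ha'

theorem Submodule.isCoatom_of_finrank_eq_succ [FiniteDimensional F V] {S : Submodule F V}
    (h : finrank F V = finrank F S + 1) : IsCoatom S := by
  refine ⟨fun hS => by rw [hS, finrank_top] at h; omega, fun T hST => ?_⟩
  have := Submodule.finrank_lt_finrank_of_lt hST
  exact Submodule.eq_top_of_finrank_eq (le_antisymm (Submodule.finrank_le T) (by omega))

theorem collinear_inter_vadd_of_not_isDeterminedBy [FiniteDimensional F V] {U : Set V}
    {S : Submodule F V} (hS : finrank F S = 2) (hnd : ¬ IsDeterminedBy U S) (x : V) :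
    Collinear F (U ∩ (x +ᵥ (S : Set V))) := by
  set A := U ∩ (x +ᵥ (S : Set V))
  by_contra hcol
  obtain ⟨p, hp⟩ : A.Nonempty :=
    Set.nonempty_iff_ne_empty.2 fun h => hcol (h ▸ collinear_empty F V)
  have hAS : vectorSpan F A ≤ S := vectorSpan_le_of_subset_vadd Set.inter_subset_right
  have hspan : vectorSpan F A = S := Submodule.eq_of_le_of_finrank_le hAS <| by
    rw [hS]
    by_contra! hlt
    exact hcol (collinear_iff_finrank_le_one.2 (by omega))
  refine hnd ⟨x, fun y hy => ?_⟩
  have hyp : y -ᵥ p ∈ (affineSpan F A).direction := by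
    rw [direction_affineSpan, hspan, vsub_eq_sub,
      show y - p = (y - x) - (p - x) by abel]
    exact S.sub_mem (mem_vadd_submodule_iff.1 hy) (mem_vadd_submodule_iff.1 hp.2)
  simpa using AffineSubspace.vadd_mem_of_mem_direction hyp (subset_affineSpan F A hp)

theorem ncard_vadd_submodule [Module.Finite F V] (x : V) (L : Submodule F V) :
    (x +ᵥ (L : Set V)).ncard = Nat.card F ^ finrank F L := by
  rw [Set.ncard_vadd_set, ← Nat.card_coe_set_eq, SetLike.coe_sort_coe,
    Module.natCard_eq_pow_finrank (K := F)]

variable [Finite F] [Finite V]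

theorem Collinear.ncard_le {A : Set V} (h : Collinear F A) : A.ncard ≤ Nat.card F := by
  rcases A.eq_empty_or_nonempty with rfl | ⟨p, hp⟩
  · simp
  calc A.ncard ≤ (p +ᵥ (vectorSpan F A : Set V)).ncard :=
        Set.ncard_le_ncard (subset_vadd_vectorSpan hp)
    _ = Nat.card F ^ finrank F (vectorSpan F A) := ncard_vadd_submodule p _
    _ ≤ Nat.card F ^ 1 := Nat.pow_le_pow_right Nat.card_pos (collinear_iff_finrank_le_one.1 h)
    _ = Nat.card F := pow_one _

theorem ncard_inter_vadd_of_not_isDeterminedBy {U : Set V} {S : Submodule F V}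
    (hV : finrank F V = 3) (hS : finrank F S = 2) (hU : U.ncard = Nat.card F ^ 2)
    (hnd : ¬ IsDeterminedBy U S) (x : V) : (U ∩ (x +ᵥ (S : Set V))).ncard = Nat.card F := by
  have hfiber : ∀ y : V, S.mkQ ⁻¹' {S.mkQ y} = y +ᵥ (S : Set V) := fun y => by
    ext z
    simp [mem_vadd_submodule_iff, Submodule.Quotient.eq]
  have hquot : Nat.card (V ⧸ S) = Nat.card F := by
    have := S.finrank_quotient_add_finrank
    rw [Module.natCard_eq_pow_finrank (K := F), show finrank F (V ⧸ S) = 1 by omega, pow_one]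
  have : Finite (V ⧸ S) := Finite.of_surjective _ S.mkQ_surjective
  rw [← hfiber]
  refine Set.ncard_inter_preimage_eq_of_forall_le U.toFinite (by rw [hU, hquot, sq])
    (fun b => ?_) _
  obtain ⟨y, rfl⟩ := S.mkQ_surjective b
  rw [hfiber]
  exact (collinear_inter_vadd_of_not_isDeterminedBy hS hnd y).ncard_le

end FiniteGeometry

def SlicesAreLines {F V : Type*} [Field F] [AddCommGroup V] [Module F V]
    (U : Set V) (S : Submodule F V) : Prop :=
  ∀ u ∈ U, ∃ L : Submodule F V, finrank F L = 1 ∧ L ≤ S ∧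
    U ∩ (u +ᵥ (S : Set V)) = u +ᵥ (L : Set V)

theorem slicesAreLines_of_not_isDeterminedBy {F V : Type*} [Field F] [Finite F]
    [AddCommGroup V] [Module F V] [Finite V] {U : Set V} {S : Submodule F V} (hV : finrank F V = 3)
    (hS : finrank F S = 2) (hU : U.ncard = Nat.card F ^ 2) (hnd : ¬ IsDeterminedBy U S) :
    SlicesAreLines U S := by
  intro u hu
  set A := U ∩ (u +ᵥ (S : Set V))
  have huA : u ∈ A := ⟨hu, mem_vadd_submodule_iff.2 (by simp)⟩
  have hA : A.ncard = Nat.card F := ncard_inter_vadd_of_not_isDeterminedBy hV hS hU hnd u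
  have hcol : Collinear F A := collinear_inter_vadd_of_not_isDeterminedBy hS hnd u
  have hle : A.ncard ≤ Nat.card F ^ finrank F (vectorSpan F A) :=
    ncard_vadd_submodule u (vectorSpan F A) ▸ Set.ncard_le_ncard (subset_vadd_vectorSpan huA)
  have hrank : finrank F (vectorSpan F A) = 1 := by
    refine le_antisymm (collinear_iff_finrank_le_one.1 hcol)
      (Nat.one_le_iff_ne_zero.2 fun h0 => ?_)
    rw [hA, h0, pow_zero] at hle
    exact (Finite.one_lt_card_iff_nontrivial.2 inferInstance).not_ge hle
  refine ⟨vectorSpan F A, hrank, vectorSpan_le_of_subset_vadd Set.inter_subset_right,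
    Set.eq_of_subset_of_ncard_le (subset_vadd_vectorSpan huA) ?_⟩
  rw [ncard_vadd_submodule, hrank, pow_one, hA]

section Slices

variable {F V : Type*} [Field F] [AddCommGroup V] [Module F V] [FiniteDimensional F V]
  {U : Set V} {S S₁ S₂ L : Submodule F V}

theorem SlicesAreLines.inter_vadd_eq (h : SlicesAreLines U S) (hL : finrank F L = 1)
    (hLS : L ≤ S) {x : V} (hsub : x +ᵥ (L : Set V) ⊆ U) :
    U ∩ (x +ᵥ (S : Set V)) = x +ᵥ (L : Set V) := by
  obtain ⟨L', hL', -, hslice⟩ := h x (hsub (mem_vadd_submodule_iff.2 (by simp)))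
  have hLL' : L ≤ L' := by
    have : x +ᵥ (L : Set V) ⊆ x +ᵥ (L' : Set V) :=
      hslice ▸ Set.subset_inter hsub (Set.vadd_set_mono hLS)
    exact Set.vadd_set_subset_vadd_set_iff.1 this
  rw [hslice, Submodule.eq_of_le_of_finrank_eq hLL' (hL.trans hL'.symm)]

theorem SlicesAreLines.not_le_of_not_le (h₁ : SlicesAreLines U S₁) (hS₁ : IsCoatom S₁)
    {u₀ u : V} {L₀ : Submodule F V} (h₀ : U ∩ (u₀ +ᵥ (S₂ : Set V)) = u₀ +ᵥ (L₀ : Set V))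
    (hL₀ : ¬ L₀ ≤ S₁) (h : U ∩ (u +ᵥ (S₂ : Set V)) = u +ᵥ (L : Set V)) (hL : finrank F L = 1) :
    ¬ L ≤ S₁ := by
  intro hLS₁
  obtain ⟨c, hc₀, hc⟩ := exists_mem_vadd_inter_of_not_le hS₁ hL₀ u₀ u
  have hc₀' : c ∈ U ∩ (u₀ +ᵥ (S₂ : Set V)) := h₀ ▸ hc₀
  have hcL : c ∈ U ∩ (u +ᵥ (S₂ : Set V)) := by
    rw [h, ← h₁.inter_vadd_eq hL hLS₁ (h ▸ Set.inter_subset_left)]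
    exact ⟨hc₀'.1, hc⟩
  have : u₀ +ᵥ (L₀ : Set V) = u +ᵥ (L : Set V) := by
    rw [← h₀, ← h, ← vadd_submodule_eq_of_mem hc₀'.2, ← vadd_submodule_eq_of_mem hcL.2]
  exact hL₀ (eq_of_vadd_submodule_eq this ▸ hLS₁)

theorem exists_plane_of_forall_not_le (h₁ : SlicesAreLines U S₁) (hS₁ : IsCoatom S₁)
    {D : Submodule F V} (hD : finrank F D = 1) (hDS₁ : D ≤ S₁) {pf pg : V}
    (hf : pf +ᵥ (D : Set V) ⊆ U) (hg : pg +ᵥ (D : Set V) ⊆ U)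
    (hfg : pf +ᵥ (D : Set V) ≠ pg +ᵥ (D : Set V))
    (htrans : ∀ u ∈ U, ∃ L : Submodule F V, finrank F L = 1 ∧ ¬ L ≤ S₁ ∧ u +ᵥ (L : Set V) ⊆ U) :
    ∃ (x : V) (P : Submodule F V), finrank F P = 2 ∧ U ⊆ x +ᵥ (P : Set V) := by
  have hw : pg - pf ∉ D := fun hw =>
    hfg (vadd_submodule_eq_of_mem (mem_vadd_submodule_iff.2 hw)).symm
  refine ⟨pf, D ⊔ Submodule.span F {pg - pf}, by rw [Submodule.finrank_sup_span_singleton hw, hD],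
    fun u hu => ?_⟩
  obtain ⟨L, hL, hLS₁, hLU⟩ := htrans u hu
  obtain ⟨a, ha, haf⟩ := exists_mem_vadd_inter_of_not_le hS₁ hLS₁ u pf
  obtain ⟨b, hb, hbg⟩ := exists_mem_vadd_inter_of_not_le hS₁ hLS₁ u pg
  have haD : a ∈ pf +ᵥ (D : Set V) := h₁.inter_vadd_eq hD hDS₁ hf ▸ ⟨hLU ha, haf⟩
  have hbD : b ∈ pg +ᵥ (D : Set V) := h₁.inter_vadd_eq hD hDS₁ hg ▸ ⟨hLU hb, hbg⟩
  have hab : a ≠ b := by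
    rintro rfl
    exact hfg (by rw [← vadd_submodule_eq_of_mem haD, vadd_submodule_eq_of_mem hbD])
  refine vadd_submodule_subset_of_mem_of_mem hL ha hb hab
    (Set.vadd_set_mono (le_sup_left : D ≤ _) haD) ?_ (mem_vadd_submodule_iff.2 (by simp))
  rw [mem_vadd_submodule_iff, show b - pf = (b - pg) + (pg - pf) by abel]
  exact Submodule.add_mem _ (le_sup_left (a := D) (mem_vadd_submodule_iff.1 hbD))
    (le_sup_right (a := D) (Submodule.mem_span_singleton_self _))

theorem SlicesAreLines.add_inf_eq_self (h₂ : SlicesAreLines U S₂)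
    (hinf : finrank F ↥(S₁ ⊓ S₂) ≤ 1)
    (hpar : ∀ u ∈ U, ∀ L : Submodule F V, U ∩ (u +ᵥ (S₂ : Set V)) = u +ᵥ (L : Set V) → L ≤ S₁) :
    U + ((S₁ ⊓ S₂ : Submodule F V) : Set V) = U := by
  refine subset_antisymm ?_ (Set.subset_add_left U (Submodule.zero_mem _))
  rintro _ ⟨u, hu, m, hm, rfl⟩
  obtain ⟨L, hL, hLS₂, hslice⟩ := h₂ u hu
  have hLM : L = S₁ ⊓ S₂ :=
    Submodule.eq_of_le_of_finrank_le (le_inf (hpar u hu L hslice) hLS₂) (hL ▸ hinf)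
  have : u + m ∈ U ∩ (u +ᵥ (S₂ : Set V)) :=
    hslice ▸ mem_vadd_submodule_iff.2 (by simpa [hLM] using hm)
  exact this.1

end Slices

theorem add_inf_eq_self_of_slicesAreLines {F V : Type*} [Field F] [AddCommGroup V] [Module F V]
    [FiniteDimensional F V] (hV : finrank F V = 3) {U : Set V} {S₁ S₂ : Submodule F V}
    (hne : S₁ ≠ S₂) (hS₁ : finrank F S₁ = 2) (hS₂ : finrank F S₂ = 2)
    (h₁ : SlicesAreLines U S₁) (h₂ : SlicesAreLines U S₂)
    (hplane : ¬ ∃ (x : V) (P : Submodule F V), finrank F P = 2 ∧ U ⊆ x +ᵥ (P : Set V))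
    {D : Submodule F V} (hD : finrank F D = 1) (hDS₁ : D ≤ S₁) {pf pg : V}
    (hf : pf +ᵥ (D : Set V) ⊆ U) (hg : pg +ᵥ (D : Set V) ⊆ U)
    (hfg : pf +ᵥ (D : Set V) ≠ pg +ᵥ (D : Set V)) :
    U + ((S₁ ⊓ S₂ : Submodule F V) : Set V) = U := by
  have hcoatom : IsCoatom S₁ := Submodule.isCoatom_of_finrank_eq_succ (by omega)
  have hinf : finrank F ↥(S₁ ⊓ S₂) ≤ 1 := by
    have := Submodule.finrank_lt_finrank_of_lt <| inf_lt_left.2 fun hle =>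
      hne (Submodule.eq_of_le_of_finrank_eq hle (hS₁.trans hS₂.symm))
    omega
  refine h₂.add_inf_eq_self hinf fun u₀ _ L₀ h₀ => ?_
  by_contra hL₀
  refine hplane (exists_plane_of_forall_not_le h₁ hcoatom hD hDS₁ hf hg hfg fun u hu => ?_)
  obtain ⟨L, hL, -, hslice⟩ := h₂ u hu
  exact ⟨L, hL, h₁.not_le_of_not_le hcoatom h₀ hL₀ hslice hL, hslice ▸ Set.inter_subset_left⟩

/-- Corollary 5 in the paper: assume `U` is not contained in any affine
plane. With two undetermined lines at infinity corresponding to `S₁ ≠ S₂` meeting at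
`M = S₁ ∩ S₂`, if `U` contains two distinct parallel affine lines with direction in `S₁`,
then `U` consists of parallel lines with common direction `M`, i.e. `U + M = U`. -/
theorem stmt_12 {F : Type*} [Field F] [Fintype F] {q : ℕ}
    (hq : Fintype.card F = q)
    (U : Set (Fin 3 → F)) (hU : U.ncard = q ^ 2)
    (hplane : ¬ ∃ (x : Fin 3 → F) (P : Submodule F (Fin 3 → F)),
      Module.finrank F P = 2 ∧ U ⊆ x +ᵥ (P : Set (Fin 3 → F)))
    (S₁ S₂ : Submodule F (Fin 3 → F)) (hne : S₁ ≠ S₂)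
    (hS₁ : Module.finrank F S₁ = 2) (hS₂ : Module.finrank F S₂ = 2)
    (hnd₁ : ¬ IsDeterminedBy U S₁) (hnd₂ : ¬ IsDeterminedBy U S₂)
    (M : Submodule F (Fin 3 → F)) (hM : M = S₁ ⊓ S₂)
    (h : ∃ (pf pg : Fin 3 → F) (D : Submodule F (Fin 3 → F)),
      Module.finrank F D = 1 ∧ D ≤ S₁ ∧
      pf +ᵥ (D : Set (Fin 3 → F)) ⊆ U ∧ pg +ᵥ (D : Set (Fin 3 → F)) ⊆ U ∧
      pf +ᵥ (D : Set (Fin 3 → F)) ≠ pg +ᵥ (D : Set (Fin 3 → F))) :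
    U + (M : Set (Fin 3 → F)) = U := by
  obtain ⟨pf, pg, D, hD, hDS₁, hf, hg, hfg⟩ := h
  have hV : finrank F (Fin 3 → F) = 3 := Module.finrank_fin_fun F
  have hU' : U.ncard = Nat.card F ^ 2 := by rw [Nat.card_eq_fintype_card, hq, hU]
  subst hM
  exact add_inf_eq_self_of_slicesAreLines hV hne hS₁ hS₂
    (slicesAreLines_of_not_isDeterminedBy hV hS₁ hU' hnd₁)
    (slicesAreLines_of_not_isDeterminedBy hV hS₂ hU' hnd₂) hplane hD hDS₁ hf hg hfg
end
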